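/- arXiv:1705.10206 — 5 statements merged into one kernel-verified Lean document; each statement's English description precedes it below -/
import Mathlib

section
/- Let n ≥ 2, and let n_1, n_2 be divisors of n with n_1, n_2 ≥ 2. Suppose c_1, c_2, c_3 are integers with gcd(c_1,n_1) = gcd(c_2,n_2) = gcd(c_3,n) = 1 and (n/n_1)c_1 + (n/n_2)c_2 + c_3 ≡ 0 (mod n). Let s = (n/n_2)·c_3^{-1}·(n_2 - c_2) where c_3^{-1} is the inverse of c_3 mod n. Then the order of the residue class of 2s in Z/2n is n_2, and the order of the residue class of 2s - 2 in Z/2n is n_1. -/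
/-!
In `ℤ/mdℤ` the class of `m * y` with `y` prime to `d` has order `d`. Modulo `2n` both elements
have this shape: with `mᵢ = n / nᵢ`, `2s = 2m₂ · c₃⁻¹(n₂ - c₂)`, and the relation
`m₁c₁ + m₂c₂ + c₃ ≡ 0 (mod n)` gives `s - 1 ≡ c₃⁻¹ · m₁c₁ (mod n)`, hence
`2s - 2 ≡ 2m₁ · c₃⁻¹c₁ (mod 2n)`.
-/

theorem addOrderOf_intCast_mul_of_isCoprime {m d N : ℕ} (hm : m ≠ 0) (hN : m * d = N) {y : ℤ}
    (hy : IsCoprime y d) : addOrderOf ((m * y : ℤ) : ZMod N) = d := by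
  subst hN
  refine Nat.dvd_right_iff_eq.mp fun k => ?_
  have hsmul : k • ((m * y : ℤ) : ZMod (m * d)) = ((m * (k * y) : ℤ) : ZMod (m * d)) := by
    push_cast
    ring
  rw [addOrderOf_dvd_iff_nsmul_eq_zero, hsmul, ZMod.intCast_zmod_eq_zero_iff_dvd, Nat.cast_mul,
    mul_dvd_mul_iff_left (by exact_mod_cast hm), ← Int.natCast_dvd_natCast]
  exact ⟨hy.symm.dvd_of_dvd_mul_right, fun h => dvd_mul_of_dvd_left h y⟩

theorem isCoprime_of_dvd_mul_sub_one {R : Type*} [CommRing R] {n d c c' : R} (hd : d ∣ n)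
    (h : n ∣ c * c' - 1) : IsCoprime c' d := by
  obtain ⟨u, hu⟩ := hd.trans h
  exact ⟨c, -u, by linear_combination hu⟩

theorem stmt1_general (n n1 n2 : ℕ) (c1 c2 c3 c3inv : ℤ) (hn : 2 ≤ n)
    (hn1 : n1 ∣ n) (hn2 : n2 ∣ n)
    (g1 : Int.gcd c1 n1 = 1) (g2 : Int.gcd c2 n2 = 1)
    (hinv : (n : ℤ) ∣ c3 * c3inv - 1)
    (hsum : (n : ℤ) ∣ ((n / n1 : ℕ) : ℤ) * c1 + ((n / n2 : ℕ) : ℤ) * c2 + c3) :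
    addOrderOf ((2 * (((n / n2 : ℕ) : ℤ) * c3inv * ((n2 : ℤ) - c2)) : ℤ) :
        ZMod (2 * n)) = n2 ∧
    addOrderOf ((2 * (((n / n2 : ℕ) : ℤ) * c3inv * ((n2 : ℤ) - c2)) - 2 : ℤ) :
        ZMod (2 * n)) = n1 := by
  set m1 := n / n1
  set m2 := n / n2
  have hm1 : m1 * n1 = n := Nat.div_mul_cancel hn1
  have hm2 : m2 * n2 = n := Nat.div_mul_cancel hn2
  have hm1ne : m1 ≠ 0 := left_ne_zero_of_mul (hm1 ▸ (by omega : n ≠ 0))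
  have hm2ne : m2 ≠ 0 := left_ne_zero_of_mul (hm2 ▸ (by omega : n ≠ 0))
  have hinv1 := isCoprime_of_dvd_mul_sub_one (Int.natCast_dvd_natCast.mpr hn1) hinv
  have hinv2 := isCoprime_of_dvd_mul_sub_one (Int.natCast_dvd_natCast.mpr hn2) hinv
  have hc1 : IsCoprime c1 n1 := Int.isCoprime_iff_gcd_eq_one.mpr g1
  have hc2 : IsCoprime ((n2 : ℤ) - c2) n2 := by
    have := (Int.isCoprime_iff_gcd_eq_one.mpr g2).neg_left.add_mul_left_left 1
    rwa [mul_one, neg_add_eq_sub] at this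
  constructor
  · have := addOrderOf_intCast_mul_of_isCoprime (N := 2 * n) (m := 2 * m2) (by omega)
      (by rw [← hm2]; ring) (hinv2.mul_left hc2)
    convert this using 3
    push_cast
    ring
  · obtain ⟨u, hu⟩ := hinv
    obtain ⟨t, ht⟩ := hsum
    have hcong : ((2 * (m2 * c3inv * ((n2 : ℤ) - c2)) - 2 : ℤ) : ZMod (2 * n)) =
        (((2 * m1 : ℕ) : ℤ) * (c3inv * c1) : ℤ) := by
      have hm2z : (m2 * n2 : ℤ) = n := by exact_mod_cast hm2
      rw [ZMod.intCast_eq_intCast_iff_dvd_sub]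
      exact ⟨c3inv * t - c3inv - u, by
        push_cast
        linear_combination 2 * c3inv * ht - 2 * hu - 2 * c3inv * hm2z⟩
    rw [hcong]
    exact addOrderOf_intCast_mul_of_isCoprime (by omega) (by rw [← hm1]; ring) (hinv1.mul_left hc1)

/-- For a Type 1 data set `(n, 0; (c_1,n_1),(c_2,n_2),(c_3,n))` with
`s = (n/n_2)·c_3⁻¹·(n_2 - c_2)`, the order of `2s` in `ℤ/2n` is `n_2` and the
order of `2s - 2` in `ℤ/2n` is `n_1`. -/
theorem stmt1 (n n1 n2 : ℕ) (c1 c2 c3 c3inv : ℤ) (hn : 2 ≤ n)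
    (hn1 : n1 ∣ n) (hn2 : n2 ∣ n) (h1 : 2 ≤ n1) (h2 : 2 ≤ n2)
    (g1 : Int.gcd c1 n1 = 1) (g2 : Int.gcd c2 n2 = 1) (g3 : Int.gcd c3 n = 1)
    (hinv : (n : ℤ) ∣ c3 * c3inv - 1)
    (hsum : (n : ℤ) ∣ ((n / n1 : ℕ) : ℤ) * c1 + ((n / n2 : ℕ) : ℤ) * c2 + c3) :
    addOrderOf ((2 * (((n / n2 : ℕ) : ℤ) * c3inv * ((n2 : ℤ) - c2)) : ℤ) :
        ZMod (2 * n)) = n2 ∧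
    addOrderOf ((2 * (((n / n2 : ℕ) : ℤ) * c3inv * ((n2 : ℤ) - c2)) - 2 : ℤ) :
        ZMod (2 * n)) = n1 :=
  stmt1_general n n1 n2 c1 c2 c3 c3inv hn hn1 hn2 g1 g2 hinv hsum
end

section
/- Let D = (n, g_0; (c_1,n_1), ..., (c_ℓ,n_ℓ)) be a data set of degree n and genus g(D) which is (r,s)-self compatible, i.e., there are indices 1 ≤ r < s ≤ ℓ with n_r = n_s = m and c_r + c_s ≡ 0 (mod m). Then the tuple D' = (n, g_0 + 1; (c_1,n_1), ..., omitting (c_r,n_r) and (c_s,n_s), ..., (c_ℓ,n_ℓ)) is again a valid data set, and its genus satisfies g(D') = g(D) + n/m. -/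
/-!
The two removed cone points contribute `(n/m)(c_r + c_s)` to the congruence sum, a multiple
of `n` because `m ∣ n` and `m ∣ c_r + c_s`; so the remaining sum is still divisible by `n`.
In the Riemann–Hurwitz equation they contribute `2(n - n/m)`, which is exactly compensated
by raising `g₀` by one (a change of `2n`) and `g` by `n/m`.
-/

/-- A data set of degree `n` with orbifold genus `g0` and cone-point data `L`:
each cone order divides `n`, each `c_i` is coprime to `n_i`, and
`Σ_j (n/n_j)·c_j ≡ 0 (mod n)`. -/
def IsDataSet (n _g0 : ℕ) (L : List (ℤ × ℕ)) : Prop :=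
  1 ≤ n ∧ (∀ p ∈ L, 0 < p.2 ∧ p.2 ∣ n ∧ Int.gcd p.1 p.2 = 1) ∧
    (n : ℤ) ∣ (L.map (fun p => ((n / p.2 : ℕ) : ℤ) * p.1)).sum

/-- The Riemann–Hurwitz equation `(2-2g)/n = 2-2g0 + Σ_j (1/n_j - 1)`, in its
integer form `2 - 2g = n(2 - 2g0) - Σ_j (n - n/n_j)`. -/
def GenusEq (n g0 : ℕ) (L : List (ℤ × ℕ)) (g : ℤ) : Prop :=
  2 - 2 * g = (n : ℤ) * (2 - 2 * (g0 : ℤ)) -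
    (L.map (fun p => (n : ℤ) - ((n / p.2 : ℕ) : ℤ))).sum

section TwoPoints

variable {α M : Type*} [AddCommMonoid M] (A B C : List α) (a b : α)

theorem List.sum_map_append_singleton_append_singleton (f : α → M) :
    ((A ++ [a] ++ B ++ [b] ++ C).map f).sum = ((A ++ B ++ C).map f).sum + (f a + f b) := by
  simp only [List.map_append, List.sum_append, List.map_cons, List.map_nil, List.sum_cons,
    List.sum_nil, add_zero]
  abel

theorem List.subset_append_singleton_append_singleton :
    A ++ B ++ C ⊆ A ++ [a] ++ B ++ [b] ++ C := by
  intro p hp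
  simp only [List.mem_append, List.mem_singleton] at hp ⊢
  tauto

end TwoPoints

theorem IsDataSet.remove_selfCompatible_pair {n g0 m : ℕ} {cr cs : ℤ} {A B C : List (ℤ × ℕ)}
    (hD : IsDataSet n g0 (A ++ [(cr, m)] ++ B ++ [(cs, m)] ++ C)) (hcomp : (m : ℤ) ∣ cr + cs)
    (g0' : ℕ) : IsDataSet n g0' (A ++ B ++ C) := by
  obtain ⟨hn, hmem, hsum⟩ := hD
  have hmn : m ∣ n := (hmem (cr, m) (by simp)).2.1
  have hpair : (n : ℤ) ∣ ((n / m : ℕ) : ℤ) * cr + ((n / m : ℕ) : ℤ) * cs := by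
    have hnm : ((n / m : ℕ) : ℤ) * m = n := by exact_mod_cast Nat.div_mul_cancel hmn
    rw [← mul_add, ← hnm]
    exact mul_dvd_mul_left _ hcomp
  refine ⟨hn, fun p hp => hmem p (List.subset_append_singleton_append_singleton _ _ _ _ _ hp), ?_⟩
  rw [List.sum_map_append_singleton_append_singleton] at hsum
  exact (dvd_add_left hpair).mp hsum

theorem GenusEq.remove_pair {n g0 m : ℕ} {cr cs : ℤ} {A B C : List (ℤ × ℕ)} {g : ℤ}
    (hg : GenusEq n g0 (A ++ [(cr, m)] ++ B ++ [(cs, m)] ++ C) g) :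
    GenusEq n (g0 + 1) (A ++ B ++ C) (g + ((n / m : ℕ) : ℤ)) := by
  unfold GenusEq at hg ⊢
  rw [List.sum_map_append_singleton_append_singleton] at hg
  dsimp only at hg
  rw [Nat.cast_add, Nat.cast_one]
  linarith

/-- If `D` is an `(r,s)`-self compatible data set (two cone pairs of the
same order `m` with `c_r + c_s ≡ 0 (mod m)`), then dropping those two pairs and
increasing the orbifold genus by one gives a valid data set whose genus is
`g(D) + n/m`. -/
theorem stmt4 (n g0 m : ℕ) (cr cs : ℤ) (A B C : List (ℤ × ℕ)) (g : ℤ)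
    (hD : IsDataSet n g0 (A ++ [(cr, m)] ++ B ++ [(cs, m)] ++ C))
    (hcomp : (m : ℤ) ∣ cr + cs)
    (hg : GenusEq n g0 (A ++ [(cr, m)] ++ B ++ [(cs, m)] ++ C) g) :
    IsDataSet n (g0 + 1) (A ++ B ++ C) ∧
      GenusEq n (g0 + 1) (A ++ B ++ C) (g + ((n / m : ℕ) : ℤ)) :=
  ⟨hD.remove_selfCompatible_pair hcomp _, hg.remove_pair⟩
end

section
/- For i = 1, 2, let D_i = (n, g_{i,0}; (c_{i,1},n_{i,1}), ..., (c_{i,ℓ_i},n_{i,ℓ_i})) be data sets of degree n forming an (r,s)-compatible pair, i.e., n_{1,r} = n_{2,s} = m and c_{1,r} + c_{2,s} ≡ 0 (mod m). Then the tuple D = (n, g_{1,0} + g_{2,0}; consisting of all pairs from D_1 except (c_{1,r},n_{1,r}) together with all pairs from D_2 except (c_{2,s},n_{2,s})) is a valid data set, and its genus satisfies 1 + g(D) - g(D_1) - g(D_2) = n/m. -/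
/-!
Both the monodromy sum `Σ (n/n_j) c_j` and the Riemann–Hurwitz sum `Σ (n - n/n_j)` are
additive in the cone data. Dropping the two compatible cones removes `(n/m)(c_{1,r} + c_{2,s})`
from the monodromy sum, a multiple of `n` since `m ∣ n` and `m ∣ c_{1,r} + c_{2,s}`. It removes
`2(n - n/m)` from the Riemann–Hurwitz sum, while `n(2 - 2(g₁₀ + g₂₀))` is
`n(2 - 2g₁₀) + n(2 - 2g₂₀) - 2n`; hence `2 - 2g = (2 - 2g₁) + (2 - 2g₂) - 2n/m`.
-/

theorem List.sum_map_append_singleton_append {α M : Type*} [AddCommMonoid M] (f : α → M)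
    (A B : List α) (x : α) :
    ((A ++ [x] ++ B).map f).sum = f x + ((A ++ B).map f).sum := by
  simp only [List.map_append, List.sum_append, List.map_cons, List.map_nil, List.sum_cons,
    List.sum_nil, add_zero]
  abel

theorem List.mem_append_singleton_append_of_mem {α : Type*} {A B : List α} {x y : α}
    (h : y ∈ A ++ B) : y ∈ A ++ [x] ++ B :=
  ((List.sublist_append_left A [x]).append_right B).subset (by simpa using h)

theorem Int.dvd_natCast_div_mul {n m : ℕ} {c : ℤ} (hmn : m ∣ n) (hmc : (m : ℤ) ∣ c) :
    (n : ℤ) ∣ ((n / m : ℕ) : ℤ) * c := by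
  have hn : (n : ℤ) = ((n / m : ℕ) : ℤ) * m := by
    rw [← Nat.cast_mul, Nat.div_mul_cancel hmn]
  rw [hn]
  exact mul_dvd_mul_left _ hmc

theorem IsDataSet.combine {n g10 g20 g0 m : ℕ} {c1r c2s : ℤ} {A1 B1 A2 B2 : List (ℤ × ℕ)}
    (hD1 : IsDataSet n g10 (A1 ++ [(c1r, m)] ++ B1))
    (hD2 : IsDataSet n g20 (A2 ++ [(c2s, m)] ++ B2))
    (hcomp : (m : ℤ) ∣ c1r + c2s) :
    IsDataSet n g0 (A1 ++ B1 ++ (A2 ++ B2)) := by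
  obtain ⟨hn, hcone1, hsum1⟩ := hD1
  obtain ⟨-, hcone2, hsum2⟩ := hD2
  have hmn : m ∣ n := (hcone1 (c1r, m) (by simp)).2.1
  refine ⟨hn, fun p hp => ?_, ?_⟩
  · rcases List.mem_append.mp hp with hp | hp
    · exact hcone1 p (List.mem_append_singleton_append_of_mem hp)
    · exact hcone2 p (List.mem_append_singleton_append_of_mem hp)
  · rw [List.sum_map_append_singleton_append] at hsum1 hsum2
    have hdrop : (n : ℤ) ∣ _ := (hsum1.add hsum2).sub (Int.dvd_natCast_div_mul hmn hcomp)
    rw [List.map_append, List.sum_append]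
    convert hdrop using 1
    ring

theorem GenusEq.combine {n g10 g20 m : ℕ} {c1r c2s : ℤ} {A1 B1 A2 B2 : List (ℤ × ℕ)}
    {g g1 g2 : ℤ}
    (hg1 : GenusEq n g10 (A1 ++ [(c1r, m)] ++ B1) g1)
    (hg2 : GenusEq n g20 (A2 ++ [(c2s, m)] ++ B2) g2)
    (hg : GenusEq n (g10 + g20) (A1 ++ B1 ++ (A2 ++ B2)) g) :
    1 + g - g1 - g2 = ((n / m : ℕ) : ℤ) := by
  unfold GenusEq at hg1 hg2 hg
  rw [List.sum_map_append_singleton_append] at hg1 hg2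
  rw [List.map_append, List.sum_append, Nat.cast_add] at hg
  linarith

/-- Combining an `(r,s)`-compatible pair `(D_1, D_2)` of data sets of
degree `n` (cone pairs of equal order `m` with `c_{1,r} + c_{2,s} ≡ 0 (mod m)`) by
dropping the compatible cone pairs and adding the orbifold genera yields a valid
data set `D` with `1 + g(D) - g(D_1) - g(D_2) = n/m`. -/
theorem stmt7 (n g10 g20 m : ℕ) (c1r c2s : ℤ)
    (A1 B1 A2 B2 : List (ℤ × ℕ)) (g g1 g2 : ℤ)
    (hD1 : IsDataSet n g10 (A1 ++ [(c1r, m)] ++ B1))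
    (hD2 : IsDataSet n g20 (A2 ++ [(c2s, m)] ++ B2))
    (hcomp : (m : ℤ) ∣ c1r + c2s)
    (hg1 : GenusEq n g10 (A1 ++ [(c1r, m)] ++ B1) g1)
    (hg2 : GenusEq n g20 (A2 ++ [(c2s, m)] ++ B2) g2)
    (hg : GenusEq n (g10 + g20) (A1 ++ B1 ++ (A2 ++ B2)) g) :
    IsDataSet n (g10 + g20) (A1 ++ B1 ++ (A2 ++ B2)) ∧
      1 + g - g1 - g2 = ((n / m : ℕ) : ℤ) :=
  ⟨hD1.combine hD2 hcomp, hg1.combine hg2 hg⟩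
end

section
/- For i = 1, 2, let D_i = (n, g_{i,0}; (c_{i,1},n_{i,1}), ..., (c_{i,ℓ_i},n_{i,ℓ_i})) be any two data sets of degree n. Then the concatenated tuple ⟦D_1, D_2⟧ = (n, g_{1,0} + g_{2,0}; all cone pairs of D_1 followed by all cone pairs of D_2) is a valid data set, and g(⟦D_1,D_2⟧) = g(D_1) + g(D_2) + n - 1. -/
/-- For any two data sets `D_1, D_2` of degree `n`, the concatenation
`⟦D_1, D_2⟧` (all cone pairs of `D_1` followed by those of `D_2`, with orbifold
genus `g_{1,0} + g_{2,0}`) is a valid data set with genus `g(D_1) + g(D_2) + n - 1`. -/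
theorem stmt8 (n g10 g20 : ℕ) (L1 L2 : List (ℤ × ℕ)) (g g1 g2 : ℤ)
    (hD1 : IsDataSet n g10 L1) (hD2 : IsDataSet n g20 L2)
    (hg1 : GenusEq n g10 L1 g1) (hg2 : GenusEq n g20 L2 g2)
    (hg : GenusEq n (g10 + g20) (L1 ++ L2) g) :
    IsDataSet n (g10 + g20) (L1 ++ L2) ∧ g = g1 + g2 + (n : ℤ) - 1 := by
  obtain ⟨hn, h1, hd1⟩ := hD1
  obtain ⟨_, h2, hd2⟩ := hD2
  unfold GenusEq at hg1 hg2 hg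
  rw [List.map_append, List.sum_append] at hg
  constructor
  · refine ⟨hn, ?_, ?_⟩
    · intro p hp
      rcases List.mem_append.mp hp with h | h
      · exact h1 p h
      · exact h2 p h
    · rw [List.map_append, List.sum_append]
      exact dvd_add hd1 hd2
  · rw [Nat.cast_add] at hg
    linarith
end

section
/- Let D = (n, g_0; (c_1,n_1), ..., (c_ℓ,n_ℓ)) be a root realizing data set: n_{ℓ-1} = n_ℓ = n and c_{ℓ-1} + c_ℓ ≡ c_{ℓ-1}·c_ℓ (mod n), with ℓ ≥ 4. Then D can be decomposed as an (ℓ-1, 3)-compatible pair (D_1, D_2) where D_1 = (n, g_0; (c_1,n_1), ..., (c_{ℓ-2},n_{ℓ-2}), (c_{ℓ-1}c_ℓ, n)) and D_2 = (n, 0; (c, n), (c_{ℓ-1}, n), (c_ℓ, n)) with c ≡ -c_{ℓ-1}c_ℓ (mod n); in particular, both D_1 and D_2 are valid data sets of degree n (with D_2 having non-negative genus), and D_2 is itself a root realizing data set. -/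
def coneSum (n : ℕ) (L : List (ℤ × ℕ)) : ℤ :=
  (L.map fun p => ((n / p.2 : ℕ) : ℤ) * p.1).sum

lemma coneSum_append (n : ℕ) (L L' : List (ℤ × ℕ)) :
    coneSum n (L ++ L') = coneSum n L + coneSum n L' := by
  simp [coneSum]

lemma coneSum_map_pair_self {n : ℕ} (hn : 0 < n) (cs : List ℤ) :
    coneSum n (cs.map (·, n)) = cs.sum := by
  simp only [coneSum, List.map_map, Function.comp_def, Nat.div_self hn, Nat.cast_one, one_mul,
    List.map_id']

lemma IsDataSet.isCoprime_of_mem {n g : ℕ} {L : List (ℤ × ℕ)} (h : IsDataSet n g L)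
    {p : ℤ × ℕ} (hp : p ∈ L) : IsCoprime p.1 p.2 :=
  Int.isCoprime_iff_gcd_eq_one.mpr (h.2.1 p hp).2.2

lemma IsDataSet.replace_tail {n g : ℕ} {A L L' : List (ℤ × ℕ)} (h : IsDataSet n g (A ++ L))
    (hL' : ∀ p ∈ L', 0 < p.2 ∧ p.2 ∣ n ∧ Int.gcd p.1 p.2 = 1)
    (hsum : (n : ℤ) ∣ coneSum n L' - coneSum n L) :
    IsDataSet n g (A ++ L') := by
  obtain ⟨hn, hmem, hdvd⟩ := h
  refine ⟨hn, fun p hp => ?_, ?_⟩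
  · rcases List.mem_append.mp hp with hA | hp'
    · exact hmem p (List.mem_append_left L hA)
    · exact hL' p hp'
  · change (n : ℤ) ∣ coneSum n (A ++ L')
    change (n : ℤ) ∣ coneSum n (A ++ L) at hdvd
    rw [coneSum_append] at hdvd ⊢
    rw [show coneSum n A + coneSum n L' =
      (coneSum n A + coneSum n L) + (coneSum n L' - coneSum n L) by ring]
    exact dvd_add hdvd hsum

lemma isDataSet_map_pair_self {n : ℕ} (g : ℕ) (hn : 0 < n) {cs : List ℤ}
    (hcop : ∀ c ∈ cs, IsCoprime c n) (hsum : (n : ℤ) ∣ cs.sum) :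
    IsDataSet n g (cs.map (·, n)) := by
  refine ⟨hn, ?_, ?_⟩
  · simp only [List.mem_map]
    rintro _ ⟨c, hc, rfl⟩
    exact ⟨hn, dvd_rfl, Int.isCoprime_iff_gcd_eq_one.mp (hcop c hc)⟩
  · change (n : ℤ) ∣ coneSum n _
    rwa [coneSum_map_pair_self hn]

lemma isCoprime_of_dvd_add {a b n : ℤ} (hb : IsCoprime b n) (hd : n ∣ a + b) :
    IsCoprime a n := by
  obtain ⟨k, hk⟩ := hd
  rw [show a = -b + n * k by linarith]
  exact hb.neg_left.add_mul_left_left k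

lemma odd_of_dvd_add_sub_mul {a b n : ℤ} (ha : IsCoprime a n) (hd : n ∣ a + b - a * b) :
    Odd n := by
  by_contra hodd
  have hn2 : (2 : ℤ) ∣ n := even_iff_two_dvd.mp (Int.not_odd_iff_even.mp hodd)
  have ha_odd : Odd a := Int.not_even_iff_odd.mp fun ha2 =>
    absurd (ha.isUnit_of_dvd' (even_iff_two_dvd.mp ha2) hn2) (by decide)
  have hodd_root : Odd (a + b - a * b) := by
    rw [show a + b - a * b = 1 - (1 - a) * (1 - b) by ring]
    exact odd_one.sub_even ((Int.even_sub.mpr (by simp [ha_odd])).mul_right _)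
  exact Int.not_even_iff_odd.mpr hodd_root (even_iff_two_dvd.mpr (hn2.trans hd))

lemma genusEq_three_pair_self {n m : ℕ} (hm : n = 2 * m + 1) (a b c : ℤ) :
    GenusEq n 0 [(a, n), (b, n), (c, n)] m := by
  simp only [GenusEq, List.map_cons, List.map_nil, List.sum_cons, List.sum_nil,
    Nat.div_self (show 0 < n by omega)]
  push_cast [hm]
  ring

theorem stmt10_general (n g0 : ℕ) (cl1 cl c : ℤ) (A : List (ℤ × ℕ))
    (hD : IsDataSet n g0 (A ++ [(cl1, n), (cl, n)]))
    (hroot : (n : ℤ) ∣ cl1 + cl - cl1 * cl)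
    (hc : (n : ℤ) ∣ c + cl1 * cl) :
    IsDataSet n g0 (A ++ [(cl1 * cl, n)]) ∧
    IsDataSet n 0 [(c, n), (cl1, n), (cl, n)] ∧
    (n : ℤ) ∣ cl1 * cl + c ∧
    (∃ g2 : ℕ, GenusEq n 0 [(c, n), (cl1, n), (cl, n)] (g2 : ℤ)) ∧
    (n : ℤ) ∣ cl1 + cl - cl1 * cl := by
  have hn : 0 < n := hD.1
  have hcop1 : IsCoprime cl1 n := hD.isCoprime_of_mem (p := (cl1, n)) (by simp)
  have hcop : IsCoprime cl n := hD.isCoprime_of_mem (p := (cl, n)) (by simp)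
  have hcopc : IsCoprime c n := isCoprime_of_dvd_add (hcop1.mul_left hcop) hc
  obtain ⟨m, hm⟩ := (Int.odd_coe_nat n).mp (odd_of_dvd_add_sub_mul hcop1 hroot)
  refine ⟨?_, ?_, by rwa [add_comm], ⟨m, genusEq_three_pair_self hm c cl1 cl⟩, hroot⟩
  · refine hD.replace_tail (L := [cl1, cl].map (·, n)) (L' := [cl1 * cl].map (·, n))
      (by simpa using ⟨hn, Int.isCoprime_iff_gcd_eq_one.mp (hcop1.mul_left hcop)⟩) ?_
    rw [coneSum_map_pair_self hn, coneSum_map_pair_self hn]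
    simpa using dvd_neg.mpr hroot
  · refine isDataSet_map_pair_self 0 hn (cs := [c, cl1, cl]) (by simp [hcopc, hcop1, hcop]) ?_
    rw [show [c, cl1, cl].sum = (c + cl1 * cl) + (cl1 + cl - cl1 * cl) by
      simp only [List.sum_cons, List.sum_nil]; ring]
    exact dvd_add hc hroot

/-- A root realizing data set `D = (n, g_0; (c_1,n_1),…,(c_ℓ,n_ℓ))`
(with `n_{ℓ-1} = n_ℓ = n`, `c_{ℓ-1} + c_ℓ ≡ c_{ℓ-1}c_ℓ (mod n)`, `ℓ ≥ 4`) decomposes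
as a compatible pair `(D_1, D_2)` with
`D_1 = (n, g_0; (c_1,n_1),…,(c_{ℓ-2},n_{ℓ-2}), (c_{ℓ-1}c_ℓ, n))` and
`D_2 = (n, 0; (c,n),(c_{ℓ-1},n),(c_ℓ,n))` where `c ≡ -c_{ℓ-1}c_ℓ (mod n)`:
both are valid data sets, the compatibility `c + c_{ℓ-1}c_ℓ ≡ 0 (mod n)` holds,
`D_2` has non-negative genus, and `D_2` is itself root realizing. -/
theorem stmt10 (n g0 : ℕ) (cl1 cl c : ℤ) (A : List (ℤ × ℕ))
    (hD : IsDataSet n g0 (A ++ [(cl1, n), (cl, n)]))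
    (hlen : 2 ≤ A.length)
    (hroot : (n : ℤ) ∣ cl1 + cl - cl1 * cl)
    (hc : (n : ℤ) ∣ c + cl1 * cl) :
    IsDataSet n g0 (A ++ [(cl1 * cl, n)]) ∧
    IsDataSet n 0 [(c, n), (cl1, n), (cl, n)] ∧
    (n : ℤ) ∣ cl1 * cl + c ∧
    (∃ g2 : ℕ, GenusEq n 0 [(c, n), (cl1, n), (cl, n)] (g2 : ℤ)) ∧
    (n : ℤ) ∣ cl1 + cl - cl1 * cl :=
  stmt10_general n g0 cl1 cl c A hD hroot hc
end
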